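/- arXiv:2503.16900 — 2 statements merged into one kernel-verified Lean document; each statement's English description precedes it below -/
import Mathlib

section
/- Let 𝒫 be a transposed Poisson superalgebra over 𝕂. Then for all homogeneous x, y, u, v ∈ 𝒫: 2 u·v·[x,y] = (-1)^{|x||v|}[u·x, v·y] + (-1)^{|u|(|x|+|v|)}[v·x, u·y]. -/
/-- Sign function: `sgn K p = (-1)^p` for a parity `p : ZMod 2`. -/
def sgn (K : Type*) [Field K] : ZMod 2 → K := fun p => if p = 0 then 1 else -1

/-!
Apply the compatibility identity to `v` and then to `u`: this expresses `4 u·v·[x,y]` through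
`[(uv)x, y]`, `[x, (uv)y]` and the two brackets of the claim. Applying it once to the homogeneous
element `uv` expresses `2 u·v·[x,y] = 2 (uv)·[x,y]` through the first two alone, and the
difference of the two expansions is the claim.
-/

theorem sgn_add (K : Type*) [Field K] (a b : ZMod 2) : sgn K (a + b) = sgn K a * sgn K b := by
  have hcases : ∀ c : ZMod 2, c = 0 ∨ c = 1 := by decide
  rcases hcases a with rfl | rfl <;> rcases hcases b with rfl | rfl <;>
    simp [sgn, (by decide : (1 : ZMod 2) + 1 = 0)]

section Compatibility

variable {K : Type*} [Field K] {P : Type*} [AddCommGroup P] [Module K P]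
  {H : ZMod 2 → Submodule K P} {m br : P →ₗ[K] P →ₗ[K] P}

theorem four_smul_mul_mul_bracket
    (hmH : ∀ (p q : ZMod 2) (x y : P), x ∈ H p → y ∈ H q → m x y ∈ H (p + q))
    (hcomp : ∀ (p q r : ZMod 2) (x y z : P), x ∈ H p → y ∈ H q → z ∈ H r →
      (2 : K) • m z (br x y) = br (m z x) y + sgn K (p * r) • br x (m z y))
    {p q s t : ZMod 2} {x y u v : P} (hx : x ∈ H p) (hy : y ∈ H q) (hu : u ∈ H s)
    (hv : v ∈ H t) :
    (4 : K) • m u (m v (br x y)) =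
      br (m u (m v x)) y + sgn K (s * (p + t)) • br (m v x) (m u y) +
        (sgn K (p * t) • br (m u x) (m v y) + sgn K (p * (s + t)) • br x (m u (m v y))) := by
  have hvx := hcomp (t + p) q s (m v x) y u (hmH t p v x hv hx) hy hu
  have hvy := hcomp p (t + q) s x (m v y) u hx (hmH t q v y hv hy) hu
  have hsgn : sgn K (p * t) * sgn K (p * s) = sgn K (p * (s + t)) := by
    rw [← sgn_add]; ring_nf
  calc (4 : K) • m u (m v (br x y)) = (2 : K) • m u ((2 : K) • m v (br x y)) := by
        rw [map_smul, smul_smul]; norm_num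
    _ = (2 : K) • m u (br (m v x) y) + sgn K (p * t) • (2 : K) • m u (br x (m v y)) := by
        rw [hcomp p q t x y v hx hy hv, map_add, map_smul, smul_add, smul_comm]
    _ = _ := by
        rw [hvx, hvy, smul_add, smul_smul, hsgn, show (t + p) * s = s * (p + t) by ring]

end Compatibility

theorem stmt4_general
    {K : Type*} [Field K]
    {P : Type*} [AddCommGroup P] [Module K P]
    -- ℤ₂-grading: `H p` is the subspace of homogeneous elements of parity `p`
    (H : ZMod 2 → Submodule K P)
    -- the associative supercommutative product `m` and the Lie superbracket `br`
    (m br : P →ₗ[K] P →ₗ[K] P)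
    (hmH : ∀ (p q : ZMod 2) (x y : P), x ∈ H p → y ∈ H q → m x y ∈ H (p + q))
    (hassoc : ∀ x y z : P, m (m x y) z = m x (m y z))
    (hcomp : ∀ (p q r : ZMod 2) (x y z : P), x ∈ H p → y ∈ H q → z ∈ H r →
      (2 : K) • m z (br x y) = br (m z x) y + sgn K (p * r) • br x (m z y)) :
    ∀ (p q s t : ZMod 2) (x y u v : P), x ∈ H p → y ∈ H q → u ∈ H s → v ∈ H t →
      (2 : K) • m u (m v (br x y)) =
        sgn K (p * t) • br (m u x) (m v y) + sgn K (s * (p + t)) • br (m v x) (m u y) := by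
  intro p q s t x y u v hx hy hu hv
  have hfour := four_smul_mul_mul_bracket hmH hcomp hx hy hu hv
  have htwo := hcomp p q (s + t) x y (m u v) hx hy (hmH s t u v hu hv)
  simp only [hassoc] at htwo
  calc (2 : K) • m u (m v (br x y))
      = (4 : K) • m u (m v (br x y)) - (2 : K) • m u (m v (br x y)) := by
        rw [← sub_smul]; norm_num
    _ = _ := by rw [hfour, htwo]; abel

theorem stmt4
    {K : Type*} [Field K] [CharZero K]
    {P : Type*} [AddCommGroup P] [Module K P]
    -- ℤ₂-grading: `H p` is the subspace of homogeneous elements of parity `p`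
    (H : ZMod 2 → Submodule K P)
    (hgrade : DirectSum.IsInternal H)
    -- the associative supercommutative product `m` and the Lie superbracket `br`
    (m br : P →ₗ[K] P →ₗ[K] P)
    (hmH : ∀ (p q : ZMod 2) (x y : P), x ∈ H p → y ∈ H q → m x y ∈ H (p + q))
    (hbrH : ∀ (p q : ZMod 2) (x y : P), x ∈ H p → y ∈ H q → br x y ∈ H (p + q))
    (hassoc : ∀ x y z : P, m (m x y) z = m x (m y z))
    (hcomm : ∀ (p q : ZMod 2) (x y : P), x ∈ H p → y ∈ H q →
      m x y = sgn K (p * q) • m y x)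
    (hskew : ∀ (p q : ZMod 2) (x y : P), x ∈ H p → y ∈ H q →
      br x y = -(sgn K (p * q) • br y x))
    (hjac : ∀ (p q r : ZMod 2) (x y z : P), x ∈ H p → y ∈ H q → z ∈ H r →
      sgn K (p * r) • br (br x y) z + sgn K (p * q) • br (br y z) x +
        sgn K (q * r) • br (br z x) y = 0)
    (hcomp : ∀ (p q r : ZMod 2) (x y z : P), x ∈ H p → y ∈ H q → z ∈ H r →
      (2 : K) • m z (br x y) = br (m z x) y + sgn K (p * r) • br x (m z y)) :
    ∀ (p q s t : ZMod 2) (x y u v : P), x ∈ H p → y ∈ H q → u ∈ H s → v ∈ H t →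
      (2 : K) • m u (m v (br x y)) =
        sgn K (p * t) • br (m u x) (m v y) + sgn K (s * (p + t)) • br (m v x) (m u y) :=
  stmt4_general H m br hmH hassoc hcomp
end

section
/- Let A = A₀ ⊕ A₁ be a supercommutative associative 𝕂-algebra and let D : A → A be an even derivation, i.e. a 𝕂-linear map with D(A₀) ⊆ A₀, D(A₁) ⊆ A₁ and D(xy) = D(x)y + x D(y). Define the bracket [x,y] = x D(y) - (-1)^{|x||y|} y D(x) on homogeneous elements. Then (A, ·, [,]) is a transposed Poisson superalgebra: the bracket satisfies |[x,y]| = |x| + |y|, [x,y] = -(-1)^{|x||y|}[y,x], the graded Jacobi identity (-1)^{|x||z|}[[x,y],z] + (-1)^{|x||y|}[[y,z],x] + (-1)^{|y||z|}[[z,x],y] = 0, and the compatibility condition 2 z·[x,y] = [z·x, y] + (-1)^{|x||z|}[x, z·y] for all homogeneous x, y, z. -/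
/-- The bracket `[x,y] = x D(y) - (-1)^{|x||y|} y D(x)` on homogeneous elements,
with the parities given as explicit arguments. -/
def dbr {K : Type*} [Field K] {A : Type*} [NonUnitalRing A] [Module K A]
    (D : A →ₗ[K] A) (x : A) (p : ZMod 2) (y : A) (q : ZMod 2) : A :=
  x * D y - sgn K (p * q) • (y * D x)

theorem zmod_two_eq_zero_or_eq_one (p : ZMod 2) : p = 0 ∨ p = 1 := by
  revert p; decide

section Sign

variable {K : Type*} [Field K]

@[simp] theorem sgn_zero : sgn K 0 = 1 := if_pos rfl

@[simp] theorem sgn_one : sgn K 1 = -1 := if_neg one_ne_zero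

theorem sgn_mul_self (p : ZMod 2) : sgn K p * sgn K p = 1 := by
  rcases zmod_two_eq_zero_or_eq_one p with rfl | rfl <;> simp

end Sign

section SuperAlgebra

variable {K : Type*} [Field K] {A : Type*} [NonUnitalRing A] [Module K A]
  {H : ZMod 2 → Submodule K A}

theorem dbr_mem {D : A →ₗ[K] A}
    (hmulH : ∀ (p q : ZMod 2) (x y : A), x ∈ H p → y ∈ H q → x * y ∈ H (p + q))
    (hDH : ∀ (p : ZMod 2) (x : A), x ∈ H p → D x ∈ H p)
    {p q : ZMod 2} {x y : A} (hx : x ∈ H p) (hy : y ∈ H q) : dbr D x p y q ∈ H (p + q) := by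
  have hyDx : y * D x ∈ H (p + q) := add_comm q p ▸ hmulH q p _ _ hy (hDH p x hx)
  exact sub_mem (hmulH p q _ _ hx (hDH q y hy)) (Submodule.smul_mem _ _ hyDx)

theorem dbr_eq_neg_sgn_smul_dbr (D : A →ₗ[K] A) (x : A) (p : ZMod 2) (y : A) (q : ZMod 2) :
    dbr D x p y q = -(sgn K (p * q) • dbr D y q x p) := by
  rw [dbr, dbr, smul_sub, smul_smul, mul_comm q p, sgn_mul_self, one_smul, neg_sub]

theorem mul_left_comm_of_mem [IsScalarTower K A A]
    (hcomm : ∀ (p q : ZMod 2) (x y : A), x ∈ H p → y ∈ H q → x * y = sgn K (p * q) • (y * x))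
    {p q : ZMod 2} {x y : A} (hx : x ∈ H p) (hy : y ∈ H q) (z : A) :
    x * (y * z) = sgn K (p * q) • (y * (x * z)) := by
  rw [← mul_assoc, hcomm p q x y hx hy, smul_mul_assoc, mul_assoc]

variable [SMulCommClass K A A] [IsScalarTower K A A] {D : A →ₗ[K] A}

theorem dbr_jacobi
    (hcomm : ∀ (p q : ZMod 2) (x y : A), x ∈ H p → y ∈ H q → x * y = sgn K (p * q) • (y * x))
    (hLeib : ∀ x y : A, D (x * y) = D x * y + x * D y)
    {p q r : ZMod 2} {x y z : A} (hx : x ∈ H p) (hy : y ∈ H q) (hz : z ∈ H r) :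
    sgn K (p * r) • dbr D (dbr D x p y q) (p + q) z r +
        sgn K (p * q) • dbr D (dbr D y q z r) (q + r) x p +
        sgn K (q * r) • dbr D (dbr D z r x p) (r + p) y q = 0 := by
  simp only [dbr, map_sub, map_smul, hLeib, mul_sub, sub_mul, mul_add, add_mul,
    smul_sub, smul_add, mul_smul_comm, smul_mul_assoc, mul_assoc, smul_smul]
  rw [mul_left_comm_of_mem hcomm hz hx, mul_left_comm_of_mem hcomm hz hy,
    mul_left_comm_of_mem hcomm hy hx]
  rcases zmod_two_eq_zero_or_eq_one p with rfl | rfl <;>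
    rcases zmod_two_eq_zero_or_eq_one q with rfl | rfl <;>
    rcases zmod_two_eq_zero_or_eq_one r with rfl | rfl <;>
    simp only [mul_zero, mul_one, add_zero, zero_add, CharTwo.add_self_eq_zero, sgn_zero,
      sgn_one] <;> module

theorem two_smul_mul_dbr
    (hcomm : ∀ (p q : ZMod 2) (x y : A), x ∈ H p → y ∈ H q → x * y = sgn K (p * q) • (y * x))
    (hDH : ∀ (p : ZMod 2) (x : A), x ∈ H p → D x ∈ H p)
    (hLeib : ∀ x y : A, D (x * y) = D x * y + x * D y)
    {p q r : ZMod 2} {x y z : A} (hx : x ∈ H p) (hy : y ∈ H q) (hz : z ∈ H r) :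
    (2 : K) • (z * dbr D x p y q) =
      dbr D (z * x) (r + p) y q + sgn K (p * r) • dbr D x p (z * y) (r + q) := by
  have hDz := hDH r z hz
  simp only [dbr, hLeib, mul_sub, mul_add, add_mul, smul_sub, smul_add, mul_smul_comm,
    mul_assoc, smul_smul]
  rw [mul_left_comm_of_mem hcomm hy hz, mul_left_comm_of_mem hcomm hx hz,
    mul_left_comm_of_mem hcomm hx hDz, mul_left_comm_of_mem hcomm hy hDz, hcomm p q x y hx hy,
    mul_smul_comm]
  rcases zmod_two_eq_zero_or_eq_one p with rfl | rfl <;>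
    rcases zmod_two_eq_zero_or_eq_one q with rfl | rfl <;>
    rcases zmod_two_eq_zero_or_eq_one r with rfl | rfl <;>
    simp only [mul_zero, mul_one, add_zero, zero_add, CharTwo.add_self_eq_zero, sgn_zero,
      sgn_one] <;> module

end SuperAlgebra

theorem stmt6_general
    {K : Type*} [Field K]
    {A : Type*} [NonUnitalRing A] [Module K A] [SMulCommClass K A A] [IsScalarTower K A A]
    -- ℤ₂-grading: `H p` is the subspace of homogeneous elements of parity `p`
    (H : ZMod 2 → Submodule K A)
    (hmulH : ∀ (p q : ZMod 2) (x y : A), x ∈ H p → y ∈ H q → x * y ∈ H (p + q))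
    (hcomm : ∀ (p q : ZMod 2) (x y : A), x ∈ H p → y ∈ H q →
      x * y = sgn K (p * q) • (y * x))
    -- an even derivation `D`
    (D : A →ₗ[K] A)
    (hDH : ∀ (p : ZMod 2) (x : A), x ∈ H p → D x ∈ H p)
    (hLeib : ∀ x y : A, D (x * y) = D x * y + x * D y) :
    -- `(A, *, dbr)` is a transposed Poisson superalgebra:
    (∀ (p q : ZMod 2) (x y : A), x ∈ H p → y ∈ H q → dbr D x p y q ∈ H (p + q)) ∧
    (∀ (p q : ZMod 2) (x y : A), x ∈ H p → y ∈ H q →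
      dbr D x p y q = -(sgn K (p * q) • dbr D y q x p)) ∧
    (∀ (p q r : ZMod 2) (x y z : A), x ∈ H p → y ∈ H q → z ∈ H r →
      sgn K (p * r) • dbr D (dbr D x p y q) (p + q) z r +
        sgn K (p * q) • dbr D (dbr D y q z r) (q + r) x p +
        sgn K (q * r) • dbr D (dbr D z r x p) (r + p) y q = 0) ∧
    (∀ (p q r : ZMod 2) (x y z : A), x ∈ H p → y ∈ H q → z ∈ H r →
      (2 : K) • (z * dbr D x p y q) =
        dbr D (z * x) (r + p) y q + sgn K (p * r) • dbr D x p (z * y) (r + q)) :=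
  ⟨fun _ _ _ _ hx hy => dbr_mem hmulH hDH hx hy,
    fun p q x y _ _ => dbr_eq_neg_sgn_smul_dbr D x p y q,
    fun _ _ _ _ _ _ hx hy hz => dbr_jacobi hcomm hLeib hx hy hz,
    fun _ _ _ _ _ _ hx hy hz => two_smul_mul_dbr hcomm hDH hLeib hx hy hz⟩

theorem stmt6
    {K : Type*} [Field K] [CharZero K]
    {A : Type*} [NonUnitalRing A] [Module K A] [SMulCommClass K A A] [IsScalarTower K A A]
    -- ℤ₂-grading: `H p` is the subspace of homogeneous elements of parity `p`
    (H : ZMod 2 → Submodule K A)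
    (hgrade : DirectSum.IsInternal H)
    (hmulH : ∀ (p q : ZMod 2) (x y : A), x ∈ H p → y ∈ H q → x * y ∈ H (p + q))
    (hcomm : ∀ (p q : ZMod 2) (x y : A), x ∈ H p → y ∈ H q →
      x * y = sgn K (p * q) • (y * x))
    -- an even derivation `D`
    (D : A →ₗ[K] A)
    (hDH : ∀ (p : ZMod 2) (x : A), x ∈ H p → D x ∈ H p)
    (hLeib : ∀ x y : A, D (x * y) = D x * y + x * D y) :
    -- `(A, *, dbr)` is a transposed Poisson superalgebra:
    (∀ (p q : ZMod 2) (x y : A), x ∈ H p → y ∈ H q → dbr D x p y q ∈ H (p + q)) ∧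
    (∀ (p q : ZMod 2) (x y : A), x ∈ H p → y ∈ H q →
      dbr D x p y q = -(sgn K (p * q) • dbr D y q x p)) ∧
    (∀ (p q r : ZMod 2) (x y z : A), x ∈ H p → y ∈ H q → z ∈ H r →
      sgn K (p * r) • dbr D (dbr D x p y q) (p + q) z r +
        sgn K (p * q) • dbr D (dbr D y q z r) (q + r) x p +
        sgn K (q * r) • dbr D (dbr D z r x p) (r + p) y q = 0) ∧
    (∀ (p q r : ZMod 2) (x y z : A), x ∈ H p → y ∈ H q → z ∈ H r →
      (2 : K) • (z * dbr D x p y q) =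
        dbr D (z * x) (r + p) y q + sgn K (p * r) • dbr D x p (z * y) (r + q)) :=
  stmt6_general H hmulH hcomm D hDH hLeib
end
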